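/- arXiv:1608.08178 — 2 statements merged into one kernel-verified Lean document; each statement's English description precedes it below -/
import Mathlib

section
/- Let r and d be integers with r ≥ 2 and d ≥ 2r−1. Then the genus of the Castelnuovo semigroup S_{r,d} equals π(r,d); that is, the set ℕ ∖ S_{r,d} is finite of cardinality (m choose 2)(r−1) + mε, where m = ⌊(d−1)/(r−1)⌋ and ε = (d−1) − m(r−1). -/
/-!
A sum of `k` elements of `[a, b]` lies in `[k a, k b]`, and every integer of `[k a, k b]` is such
a sum, so the gaps of `⟨a, a + 1, …, b⟩` are the integers lying strictly between `q b` and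
`(q + 1) a` for some `q`. For `b = a + c` and `a + c = m c + ε + 1` with `ε < c` (so `b = d` and
`c = r - 1`), the `q`-th of these open intervals holds `(m - 1 - q) c + ε` integers when `q < m`
and is empty afterwards; summing over `q` gives `(m choose 2) c + m ε`.
-/

/-- The Castelnuovo semigroup `S_{r,d}`: the additive submonoid of ℕ generated by
the interval of integers `{d-r+1, …, d}`. -/
def castelnuovoSemigroup (r d : ℕ) : AddSubmonoid ℕ :=
  AddSubmonoid.closure (Set.Icc (d - r + 1) d)

open Finset

namespace Nat

variable {a b c m ε n : ℕ}

theorem mem_closure_Icc_iff (hab : a ≤ b) :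
    n ∈ AddSubmonoid.closure (Set.Icc a b) ↔ ∃ k, k * a ≤ n ∧ n ≤ k * b := by
  constructor
  · intro hn
    induction hn using AddSubmonoid.closure_induction with
    | mem x hx => exact ⟨1, by simpa using hx.1, by simpa using hx.2⟩
    | zero => exact ⟨0, by simp, by simp⟩
    | add x y _ _ hx hy =>
      obtain ⟨k, hkx, hxk⟩ := hx
      obtain ⟨l, hly, hyl⟩ := hy
      exact ⟨k + l, by rw [add_mul]; omega, by rw [add_mul]; omega⟩
  · rintro ⟨k, hkn, hnk⟩
    induction k generalizing n with
    | zero => simp_all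
    | succ k ih =>
      rw [add_one_mul] at hkn hnk
      -- peel off one generator: `b` if that leaves at least `k a`, otherwise `n - k a ∈ [a, b]`
      rcases le_total b (n - k * a) with hb | hb
      · rw [show n = b + (n - b) by omega]
        exact add_mem (AddSubmonoid.subset_closure ⟨hab, le_rfl⟩) (ih (by omega) (by omega))
      · rw [show n = (n - k * a) + k * a by omega]
        exact add_mem (AddSubmonoid.subset_closure ⟨by omega, hb⟩)
          (ih le_rfl (Nat.mul_le_mul_left k hab))

theorem notMem_closure_Icc_iff (ha : 0 < a) (hab : a ≤ b) :
    n ∉ AddSubmonoid.closure (Set.Icc a b) ↔ ∃ q, q * b < n ∧ n < (q + 1) * a := by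
  rw [mem_closure_Icc_iff hab]
  push Not
  constructor
  · intro h
    refine ⟨n / a, h _ (Nat.div_mul_le_self n a), ?_⟩
    simpa [mul_comm] using Nat.lt_mul_div_succ n ha
  · rintro ⟨q, hqn, hnq⟩ k hkn
    have hkq : k ≤ q := Nat.le_of_lt_succ (Nat.lt_of_mul_lt_mul_right (hkn.trans_lt hnq))
    exact (Nat.mul_le_mul_right b hkq).trans_lt hqn

theorem div_eq_of_mem_Ioo (hab : a ≤ b) {q : ℕ} (hn : n ∈ Ioo (q * b) ((q + 1) * a)) :
    n / a = q := by
  rw [mem_Ioo] at hn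
  exact Nat.div_eq_of_lt_le ((Nat.mul_le_mul_left q hab).trans hn.1.le) hn.2

theorem compl_closure_Icc_add_eq (ha : 0 < a) (hm : a ≤ m * c + 1) :
    (AddSubmonoid.closure (Set.Icc a (a + c)) : Set ℕ)ᶜ =
      ↑((range m).biUnion fun q => Ioo (q * (a + c)) ((q + 1) * a)) := by
  ext n
  simp only [Set.mem_compl_iff, SetLike.mem_coe, notMem_closure_Icc_iff ha (le_add_right a c),
    coe_biUnion, coe_range, Set.mem_Iio, coe_Ioo, Set.mem_iUnion, Set.mem_Ioo, exists_prop]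
  refine exists_congr fun q => ⟨fun hq => ⟨?_, hq⟩, And.right⟩
  by_contra! hmq
  have := Nat.mul_le_mul_right c hmq
  rw [mul_add, add_one_mul] at hq
  omega

theorem card_biUnion_Ioo (hab : a ≤ b) :
    #((range m).biUnion fun q => Ioo (q * b) ((q + 1) * a)) =
      ∑ q ∈ range m, ((q + 1) * a - q * b - 1) := by
  rw [card_biUnion fun q _ q' _ hqq' => disjoint_left.2 fun n hn hn' =>
    hqq' ((div_eq_of_mem_Ioo hab hn).symm.trans (div_eq_of_mem_Ioo hab hn'))]
  simp only [Nat.card_Ioo]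

theorem sum_range_mul_add (m c ε : ℕ) :
    ∑ q ∈ range m, ((m - 1 - q) * c + ε) = m.choose 2 * c + m * ε := by
  rw [sum_add_distrib, ← sum_mul, sum_range_reflect (fun q => q) m, sum_range_id,
    ← choose_two_right, sum_const, card_range, smul_eq_mul]

theorem genus_closure_Icc_add (ha : 0 < a) (hε : ε < c) (hac : a + c = m * c + ε + 1) :
    ((AddSubmonoid.closure (Set.Icc a (a + c)) : Set ℕ)ᶜ).Finite ∧
      ((AddSubmonoid.closure (Set.Icc a (a + c)) : Set ℕ)ᶜ).ncard = m.choose 2 * c + m * ε := by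
  rw [compl_closure_Icc_add_eq ha (by omega : a ≤ m * c + 1), Set.ncard_coe_finset,
    card_biUnion_Ioo (le_add_right a c), ← sum_range_mul_add]
  refine ⟨finite_toSet _, sum_congr rfl fun q hq => ?_⟩
  have hqm : q + 1 ≤ m := mem_range.1 hq
  have hsplit : (m - 1 - q) * c + q * c + c = m * c := by
    rw [← add_mul, ← add_one_mul, show m - 1 - q + q + 1 = m by omega]
  rw [mul_add, add_one_mul]
  omega

end Nat

theorem castelnuovo_genus (r d : ℕ) (hr : 2 ≤ r) (hd : 2 * r - 1 ≤ d)
    (m ε : ℕ) (hm : m = (d - 1) / (r - 1)) (hε : ε = (d - 1) - m * (r - 1)) :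
    ((castelnuovoSemigroup r d : Set ℕ)ᶜ).Finite ∧
    ((castelnuovoSemigroup r d : Set ℕ)ᶜ).ncard =
      Nat.choose m 2 * (r - 1) + m * ε := by
  have hS : castelnuovoSemigroup r d =
      AddSubmonoid.closure (Set.Icc (d - r + 1) (d - r + 1 + (r - 1))) := by
    rw [castelnuovoSemigroup, show d - r + 1 + (r - 1) = d by omega]
  have hdiv : m * (r - 1) + ε = d - 1 := by
    rw [hε, hm]
    exact Nat.add_sub_of_le (Nat.div_mul_le_self _ _)
  have hεr : ε < r - 1 := by
    rw [hε, hm, ← Nat.mod_eq_sub_div_mul]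
    exact Nat.mod_lt _ (by omega)
  rw [hS]
  exact Nat.genus_closure_Icc_add (by omega) hεr (by omega)
end

section
/- Let g and η be integers with g ≥ 10, −2 ≤ η ≤ 2, and η ≡ g + 1 (mod 4). Then r = (g + 1 + η)/2 and d = (5g + 1 + 3η)/4 are integers satisfying r ≥ 2 and d ≥ 2r − 1, the Castelnuovo semigroup S_{r,d} has genus g, and its effective weight satisfies ewt(S_{r,d}) = ((g+1)² − η²)/8 = ⌊(g+1)²/8⌋. -/
/-- A minimal generator of a numerical semigroup `S ⊆ ℕ`: a nonzero element of `S`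
that cannot be written as a sum of two nonzero elements of `S`. -/
def IsMinimalGenerator (S : AddSubmonoid ℕ) (a : ℕ) : Prop :=
  a ∈ S ∧ a ≠ 0 ∧ ¬ ∃ x ∈ S, ∃ y ∈ S, x ≠ 0 ∧ y ≠ 0 ∧ a = x + y

/-- The effective weight of a numerical semigroup: the number of pairs `(b, a)` where
`b` is a gap of `S` and `a` is a minimal generator of `S` with `a < b`. -/
noncomputable def effectiveWeight (S : AddSubmonoid ℕ) : ℕ :=
  {p : ℕ × ℕ | p.1 ∉ S ∧ IsMinimalGenerator S p.2 ∧ p.2 < p.1}.ncard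

/-!
With `m = d - r + 1`, the semigroup `S_{r,d}` is generated by the interval `[m, d]`. When
`3m ≤ 2d + 1` the sums of `k ≥ 2` generators fill everything from `2m` on, so
`S = {0} ∪ [m, d] ∪ [2m, ∞)`: the gaps are `[1, m)` and `(d, 2m)`, the minimal generators are
exactly `[m, d]`, and every gap in `(d, 2m)` lies above all of them. Hence the genus is
`2d + 1 - 3r` and the effective weight is `(2m - d - 1)(d - m + 1) = (d + 1 - 2r) r`.
Writing `g + 1 - η = 4c` gives `r = 2c + η`, `d = 5c + 2η - 1`, genus `g` and effective weight
`c (2c + η) = ((g + 1)² - η²) / 8`, which is also `⌊(g + 1)² / 8⌋` as `0 ≤ η² < 8`.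
-/

section IntervalSemigroup

variable {m d : ℕ}

theorem exists_add_eq_of_two_mul_le (hm : 1 ≤ m) (hcover : 3 * m ≤ 2 * d + 1) {n : ℕ}
    (hn : 2 * m ≤ n) :
    ∃ x ∈ AddSubmonoid.closure (Set.Icc m d), ∃ y ∈ AddSubmonoid.closure (Set.Icc m d),
      x ≠ 0 ∧ y ≠ 0 ∧ n = x + y := by
  induction n using Nat.strong_induction_on with
  | _ n ih =>
    by_cases hle : n ≤ 2 * d
    · exact ⟨max m (n - d), AddSubmonoid.subset_closure ⟨le_max_left _ _, by omega⟩,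
        n - max m (n - d), AddSubmonoid.subset_closure ⟨by omega, by omega⟩,
        by omega, by omega, by omega⟩
    · obtain ⟨x, hx, y, hy, hx0, hy0, hxy⟩ := ih (n - m) (by omega) (by omega)
      exact ⟨m, AddSubmonoid.subset_closure ⟨le_rfl, by omega⟩, x + y, add_mem hx hy,
        by omega, by omega, by omega⟩

theorem mem_closure_Icc_iff (hm : 1 ≤ m) (hcover : 3 * m ≤ 2 * d + 1) {n : ℕ} :
    n ∈ AddSubmonoid.closure (Set.Icc m d) ↔
      n = 0 ∨ (m ≤ n ∧ n ≤ d) ∨ 2 * m ≤ n := by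
  constructor
  · intro h
    induction h using AddSubmonoid.closure_induction with
    | mem x hx => exact Or.inr (Or.inl hx)
    | zero => exact Or.inl rfl
    | add x y _ _ hx hy => omega
  · rintro (rfl | hmem | hn)
    · exact zero_mem _
    · exact AddSubmonoid.subset_closure hmem
    · obtain ⟨x, hx, y, hy, -, -, rfl⟩ := exists_add_eq_of_two_mul_le hm hcover hn
      exact add_mem hx hy

theorem isMinimalGenerator_closure_Icc_iff (hcover : 3 * m ≤ 2 * d + 1) (hd : d < 2 * m)
    {a : ℕ} :
    IsMinimalGenerator (AddSubmonoid.closure (Set.Icc m d)) a ↔ m ≤ a ∧ a ≤ d := by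
  have hm : 1 ≤ m := by omega
  constructor
  · rintro ⟨haS, ha0, hsum⟩
    rcases (mem_closure_Icc_iff hm hcover).1 haS with rfl | hmem | ha
    · exact absurd rfl ha0
    · exact hmem
    · exact absurd (exists_add_eq_of_two_mul_le hm hcover ha) hsum
  · intro hmem
    refine ⟨AddSubmonoid.subset_closure hmem, by omega, ?_⟩
    rintro ⟨x, hx, y, hy, hx0, hy0, rfl⟩
    rw [mem_closure_Icc_iff hm hcover] at hx hy
    omega

theorem compl_closure_Icc (hm : 1 ≤ m) (hcover : 3 * m ≤ 2 * d + 1) :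
    ((AddSubmonoid.closure (Set.Icc m d) : Set ℕ)ᶜ) =
      ↑(Finset.Ico 1 m ∪ Finset.Ioo d (2 * m)) := by
  ext n
  simp only [Set.mem_compl_iff, SetLike.mem_coe, mem_closure_Icc_iff hm hcover, Finset.coe_union,
    Set.mem_union, Finset.coe_Ico, Finset.coe_Ioo, Set.mem_Ico, Set.mem_Ioo]
  omega

theorem ncard_compl_closure_Icc (hm : 1 ≤ m) (hcover : 3 * m ≤ 2 * d + 1) :
    ((AddSubmonoid.closure (Set.Icc m d) : Set ℕ)ᶜ).ncard = (m - 1) + (2 * m - d - 1) := by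
  have hdisj : Disjoint (Finset.Ico 1 m) (Finset.Ioo d (2 * m)) := by
    rw [Finset.disjoint_left]
    intro n hn hn'
    simp only [Finset.mem_Ico, Finset.mem_Ioo] at hn hn'
    omega
  rw [compl_closure_Icc hm hcover, Set.ncard_coe_finset, Finset.card_union_of_disjoint hdisj,
    Nat.card_Ico, Nat.card_Ioo]

theorem effectiveWeight_closure_Icc (hcover : 3 * m ≤ 2 * d + 1) (hd : d < 2 * m) :
    effectiveWeight (AddSubmonoid.closure (Set.Icc m d)) = (2 * m - d - 1) * (d - m + 1) := by
  have hm : 1 ≤ m := by omega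
  have hpairs : {p : ℕ × ℕ | p.1 ∉ AddSubmonoid.closure (Set.Icc m d) ∧
      IsMinimalGenerator (AddSubmonoid.closure (Set.Icc m d)) p.2 ∧ p.2 < p.1}
      = ↑(Finset.Ioo d (2 * m) ×ˢ Finset.Icc m d) := by
    ext ⟨b, a⟩
    simp only [Set.mem_ofPred_eq, mem_closure_Icc_iff hm hcover,
      isMinimalGenerator_closure_Icc_iff hcover hd, Finset.coe_product, Set.mem_prod,
      Finset.coe_Ioo, Finset.coe_Icc, Set.mem_Ioo, Set.mem_Icc]
    omega
  rw [effectiveWeight, hpairs, Set.ncard_coe_finset, Finset.card_product, Nat.card_Ioo,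
    Nat.card_Icc]
  congr 1
  omega

end IntervalSemigroup

section Castelnuovo

variable {r d : ℕ}

theorem ncard_compl_castelnuovoSemigroup (hrd : 2 * r ≤ d + 1) (hdr : d + 2 ≤ 3 * r) :
    ((castelnuovoSemigroup r d : Set ℕ)ᶜ).ncard = 2 * d + 1 - 3 * r := by
  rw [castelnuovoSemigroup, ncard_compl_closure_Icc (by omega) (by omega)]
  omega

theorem effectiveWeight_castelnuovoSemigroup (hrd : 2 * r ≤ d + 1) (hdr : d + 2 ≤ 3 * r) :
    effectiveWeight (castelnuovoSemigroup r d) = (d + 1 - 2 * r) * r := by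
  rw [castelnuovoSemigroup, effectiveWeight_closure_Icc (by omega) (by omega)]
  congr 1 <;> omega

end Castelnuovo

theorem castelnuovo_of_max_ewt (g η : ℤ) (hg : 10 ≤ g) (hη1 : -2 ≤ η) (hη2 : η ≤ 2)
    (hmod : (4 : ℤ) ∣ (g + 1 - η)) :
    ∃ r d : ℕ, (2 * (r : ℤ) = g + 1 + η) ∧ (4 * (d : ℤ) = 5 * g + 1 + 3 * η) ∧
      2 ≤ r ∧ 2 * r - 1 ≤ d ∧
      (((castelnuovoSemigroup r d : Set ℕ)ᶜ).ncard : ℤ) = g ∧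
      (effectiveWeight (castelnuovoSemigroup r d) : ℤ) = ((g + 1) ^ 2 - η ^ 2) / 8 ∧
      (effectiveWeight (castelnuovoSemigroup r d) : ℤ) = (g + 1) ^ 2 / 8 := by
  obtain ⟨c, hc⟩ := hmod
  obtain ⟨r, hr⟩ : ∃ r : ℕ, (r : ℤ) = 2 * c + η :=
    ⟨_, Int.toNat_of_nonneg (by omega)⟩
  obtain ⟨d, hd⟩ : ∃ d : ℕ, (d : ℤ) = 5 * c + 2 * η - 1 :=
    ⟨_, Int.toNat_of_nonneg (by omega)⟩
  have hrd : 2 * r ≤ d + 1 := by omega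
  have hdr : d + 2 ≤ 3 * r := by omega
  have hewt : (effectiveWeight (castelnuovoSemigroup r d) : ℤ) = c * (2 * c + η) := by
    have hgaps : ((d + 1 - 2 * r : ℕ) : ℤ) = c := by omega
    rw [effectiveWeight_castelnuovoSemigroup hrd hdr, Nat.cast_mul, hgaps, hr]
  have hsq : (g + 1) ^ 2 = η ^ 2 + c * (2 * c + η) * 8 := by
    linear_combination (g + 1 + η + 4 * c) * hc
  refine ⟨r, d, by omega, by omega, by omega, by omega, ?_, ?_, ?_⟩
  · rw [ncard_compl_castelnuovoSemigroup hrd hdr]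
    omega
  · rw [hewt, hsq, add_sub_cancel_left, Int.mul_ediv_cancel _ (by norm_num)]
  · have hη_sq : η ^ 2 < 8 := by nlinarith
    rw [hewt, hsq, Int.add_mul_ediv_right _ _ (by norm_num),
      Int.ediv_eq_zero_of_lt (sq_nonneg η) hη_sq, zero_add]
end
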